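/- arXiv:2106.10917 — 3 statements merged into one kernel-verified Lean document; each statement's English description precedes it below -/
import Mathlib

section
/- For integers k_1,...,k_r ≥ 1, r ≥ 1, and n ≥ 0, the multi-Bernoulli numbers satisfy B_n^{(k_1,...,k_r)} = Σ_{l=0}^{n} Σ_{m=r}^{l+r} [ binom(n,l) B_{n−l}^{(r)} (−1)^{n−r−m} / (r! binom(l+r,r)) ] · S_2(l+r,m) · S_1^{(k_1,...,k_r)}(m,r), where B_j^{(r)} are the Bernoulli numbers of order r and S_2 are the Stirling numbers of the second kind. -/
open scoped Classical in
/-- The coefficient of `z^n` in the multiple logarithm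
`Li_{k_1,...,k_r}(z) = Σ_{0<m_1<⋯<m_r} z^{m_r}/(m_1^{k_1}⋯m_r^{k_r})`, i.e.
`Σ_{0<m_1<⋯<m_{r-1}<m_r=n} 1/(m_1^{k_1}⋯m_r^{k_r})` (integer indices allowed; for a strictly
increasing positive tuple, `m_r` is the supremum of its entries). -/
noncomputable def liCoeff (r : ℕ) (k : Fin r → ℤ) (n : ℕ) : ℚ :=
  ∑ m : Fin r → Fin (n + 1),
    if StrictMono m ∧ (∀ i, 0 < m i) ∧ (Finset.univ.sup fun i => (m i : ℕ)) = n then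
      (∏ i, ((m i : ℕ) : ℚ) ^ (k i))⁻¹
    else 0

/-- Multi-Stirling numbers of the first kind:
`S_1^{(k_1,...,k_r)}(n,r) = n! ⬝ Σ_{0<m_1<⋯<m_{r-1}<n} 1/(m_1^{k_1}⋯m_{r-1}^{k_{r-1}} n^{k_r})`,
so that `Li_{k_1,...,k_r}(t) = Σ_{n≥r} S_1^{(k_1,...,k_r)}(n,r) t^n/n!`. -/
noncomputable def multiStirling1 (r : ℕ) (k : Fin r → ℕ) (n : ℕ) : ℚ :=
  (n.factorial : ℚ) * liCoeff r (fun i => (k i : ℤ)) n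

/-- The formal power series `1 - e^{-t} ∈ ℚ⟦t⟧`. -/
noncomputable def oneSubExpNeg : PowerSeries ℚ :=
  1 - PowerSeries.rescale (-1) (PowerSeries.exp ℚ)

/-- Multi-Bernoulli numbers, defined by the formal power series identity
`Σ_{n≥0} B_n^{(k_1,...,k_r)} t^n/n! = Li_{k_1,...,k_r}(1-e^{-t})/(1-e^{-t})^r
  = Σ_{m≥r} (S_1^{(k_1,...,k_r)}(m,r)/m!) (1-e^{-t})^{m-r}` in `ℚ⟦t⟧`,
where `S_1^{(k_1,...,k_r)}(m,r)/m! = liCoeff r k m`. Since `(1-e^{-t})^j` has order `≥ j`,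
the `n`-th coefficient of the series only involves the (finitely many) terms with
`j = m - r ≤ n`, so the infinite sum may be truncated exactly. -/
noncomputable def multiBernoulli (r : ℕ) (k : Fin r → ℕ) (n : ℕ) : ℚ :=
  (n.factorial : ℚ) *
    PowerSeries.coeff n
      (∑ j ∈ Finset.range (n + 1), liCoeff r (fun i => (k i : ℤ)) (j + r) • oneSubExpNeg ^ j)

/-- Stirling numbers of the second kind, defined by `(e^t-1)^j/j! = Σ_{n≥j} S_2(n,j) t^n/n!`. -/
noncomputable def stirling2 (n j : ℕ) : ℚ :=
  (n.factorial : ℚ) / j.factorial * PowerSeries.coeff n ((PowerSeries.exp ℚ - 1) ^ j)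

/-- Bernoulli numbers of order `r`, defined by `(t/(e^t-1))^r = Σ_{n≥0} B_n^{(r)} t^n/n!`, where
`t/(e^t-1)` is the inverse in `ℚ⟦t⟧` of the power series `(e^t-1)/t = Σ_i t^i/(i+1)!`. -/
noncomputable def bernoulliOrder (r n : ℕ) : ℚ :=
  (n.factorial : ℚ) *
    PowerSeries.coeff n ((PowerSeries.mk fun i => (1 : ℚ) / (i + 1).factorial)⁻¹ ^ r)

/-!
Write `G = (e^t - 1)/t`, so that `Σ_n B_n^{(r)} t^n/n! = G^{-r}`. Since
`G^{-r} (e^t - 1)^{j+r} = t^r (e^t - 1)^j`, comparing coefficients of `t^{n+r}` gives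
`Σ_l C(n,l) B_{n-l}^{(r)} S_2(l+r, j+r) / C(l+r, r) = S_2(n, j) / C(j+r, r)`.
On the other hand `(1 - e^{-t})^j = Σ_n (-1)^{n+j} j! S_2(n,j) t^n/n!`, so the definition gives
`B_n^{(k)} = Σ_j (-1)^{n+j} j! S_2(n,j) S_1^{(k)}(j+r, r)/(j+r)!`, and substituting the first
identity for `S_2(n, j)` yields the theorem.
-/

open Finset PowerSeries

theorem sum_Icc_eq_sum_range_add {M : Type*} [AddCommMonoid M] {f : ℕ → M} {r l n : ℕ}
    (hln : l ≤ n) (hf : ∀ j, l < j → f (r + j) = 0) :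
    ∑ m ∈ Icc r (l + r), f m = ∑ j ∈ range (n + 1), f (r + j) := by
  rw [← Ico_add_one_right_eq_Icc, sum_Ico_eq_sum_range, show l + r + 1 - r = l + 1 by omega]
  refine sum_subset (range_subset_range.2 (by omega)) fun j _ hj => hf j ?_
  simpa using hj

theorem neg_one_zpow_sub_sub_add {K : Type*} [DivisionRing K] (a b c : ℕ) :
    (-1 : K) ^ ((a : ℤ) - b - (b + c : ℕ)) = (-1) ^ (a + c) := by
  have h : (a : ℤ) - b - (b + c : ℕ) = (a + c : ℕ) - (2 * (b + c) : ℕ) := by push_cast; ring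
  rw [h, zpow_sub₀ (by norm_num), zpow_natCast, zpow_natCast, pow_mul]
  simp

noncomputable def expSubOneDivX : ℚ⟦X⟧ :=
  mk fun i => (1 : ℚ) / (i + 1).factorial

theorem exp_sub_one_eq_X_mul_expSubOneDivX : exp ℚ - 1 = X * expSubOneDivX := by
  ext n
  cases n with
  | zero => simp [expSubOneDivX]
  | succ n => simp [expSubOneDivX, coeff_exp, coeff_succ_X_mul]

theorem expSubOneDivX_mul_inv : expSubOneDivX * expSubOneDivX⁻¹ = 1 :=
  PowerSeries.mul_inv_cancel _ (by simp [expSubOneDivX, ← coeff_zero_eq_constantCoeff_apply])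

theorem coeff_inv_expSubOneDivX_pow (r n : ℕ) :
    coeff n (expSubOneDivX⁻¹ ^ r) = bernoulliOrder r n / n.factorial := by
  rw [bernoulliOrder, mul_div_cancel_left₀ _ (by positivity)]
  rfl

theorem coeff_exp_sub_one_pow (n j : ℕ) :
    coeff n ((exp ℚ - 1) ^ j) = j.factorial * stirling2 n j / n.factorial := by
  rw [stirling2]
  field_simp

theorem stirling2_eq_zero_of_lt {n j : ℕ} (h : n < j) : stirling2 n j = 0 := by
  rw [stirling2, exp_sub_one_eq_X_mul_expSubOneDivX, mul_pow, coeff_X_pow_mul', if_neg (by omega),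
    mul_zero]

theorem coeff_oneSubExpNeg_pow (n j : ℕ) :
    coeff n (oneSubExpNeg ^ j) = (-1) ^ (n + j) * coeff n ((exp ℚ - 1) ^ j) := by
  have h : oneSubExpNeg = C (-1 : ℚ) * rescale (-1) (exp ℚ - 1) := by
    rw [oneSubExpNeg, map_sub, map_one]
    simp
  rw [h, mul_pow, ← map_pow, ← map_pow, coeff_C_mul, coeff_rescale]
  ring

theorem multiBernoulli_eq_sum_stirling2 (r : ℕ) (k : Fin r → ℕ) (n : ℕ) :
    multiBernoulli r k n = ∑ j ∈ range (n + 1),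
      (-1) ^ (n + j) * j.factorial * stirling2 n j * liCoeff r (fun i => (k i : ℤ)) (j + r) := by
  rw [multiBernoulli, map_sum, mul_sum]
  refine sum_congr rfl fun j _ => ?_
  rw [coeff_smul, smul_eq_mul, coeff_oneSubExpNeg_pow, coeff_exp_sub_one_pow]
  field_simp

theorem coeff_add_exp_sub_one_pow_add (l r j : ℕ) :
    coeff (l + r) ((exp ℚ - 1) ^ (j + r)) = coeff l (expSubOneDivX ^ r * (exp ℚ - 1) ^ j) := by
  have h : (exp ℚ - 1) ^ (j + r) = X ^ r * (expSubOneDivX ^ r * (exp ℚ - 1) ^ j) := by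
    rw [pow_add, exp_sub_one_eq_X_mul_expSubOneDivX, mul_pow]
    ring
  rw [h, coeff_X_pow_mul]

theorem sum_coeff_exp_sub_one_pow_add_mul_coeff_inv_pow (r j n : ℕ) :
    ∑ l ∈ range (n + 1), coeff (l + r) ((exp ℚ - 1) ^ (j + r)) *
      coeff (n - l) (expSubOneDivX⁻¹ ^ r) = coeff n ((exp ℚ - 1) ^ j) := by
  have h : expSubOneDivX ^ r * (exp ℚ - 1) ^ j * expSubOneDivX⁻¹ ^ r = (exp ℚ - 1) ^ j := by
    rw [mul_right_comm, ← mul_pow, expSubOneDivX_mul_inv, one_pow, one_mul]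
  simp_rw [coeff_add_exp_sub_one_pow_add]
  rw [← Nat.sum_antidiagonal_eq_sum_range_succ (fun a b => coeff a _ * coeff b _), ← coeff_mul, h]

theorem sum_choose_mul_bernoulliOrder_mul_stirling2 (r j n : ℕ) :
    ∑ l ∈ range (n + 1), (n.choose l : ℚ) * bernoulliOrder r (n - l) *
      stirling2 (l + r) (j + r) / ((l + r).choose r) = stirling2 n j / (j + r).choose r := by
  have h := sum_coeff_exp_sub_one_pow_add_mul_coeff_inv_pow r j n
  simp only [coeff_exp_sub_one_pow, coeff_inv_expSubOneDivX_pow] at h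
  calc _ = n.factorial * r.factorial / (j + r).factorial * ∑ l ∈ range (n + 1),
        (j + r).factorial * stirling2 (l + r) (j + r) / (l + r).factorial *
          (bernoulliOrder r (n - l) / (n - l).factorial) := by
        rw [mul_sum]
        refine sum_congr rfl fun l hl => ?_
        rw [Nat.cast_choose ℚ (mem_range_succ_iff.1 hl),
          Nat.cast_choose ℚ (Nat.le_add_left r l), Nat.add_sub_cancel]
        field_simp
    _ = _ := by
        rw [h, Nat.cast_choose ℚ (Nat.le_add_left r j), Nat.add_sub_cancel]
        field_simp

theorem multiBernoulli_eq_sum_multiStirling1_general (r : ℕ) (k : Fin r → ℕ) (n : ℕ) :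
    multiBernoulli r k n =
      ∑ l ∈ Finset.range (n + 1), ∑ m ∈ Finset.Icc r (l + r),
        (n.choose l : ℚ) * bernoulliOrder r (n - l) *
            (-1 : ℚ) ^ ((n : ℤ) - (r : ℤ) - (m : ℤ)) /
            ((r.factorial : ℚ) * ((l + r).choose r : ℚ)) *
          stirling2 (l + r) m * multiStirling1 r k m := by
  rw [multiBernoulli_eq_sum_stirling2]
  symm
  refine (sum_congr rfl fun l hl => sum_Icc_eq_sum_range_add (mem_range_succ_iff.1 hl)
    fun j hj => ?_).trans ?_
  · rw [stirling2_eq_zero_of_lt (show l + r < r + j by omega), mul_zero, zero_mul]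
  rw [sum_comm]
  refine sum_congr rfl fun j _ => ?_
  calc _ = (-1) ^ (n + j) * multiStirling1 r k (j + r) / r.factorial *
        ∑ l ∈ range (n + 1), (n.choose l : ℚ) * bernoulliOrder r (n - l) *
          stirling2 (l + r) (j + r) / ((l + r).choose r) := by
        rw [mul_sum]
        refine sum_congr rfl fun l _ => ?_
        rw [neg_one_zpow_sub_sub_add, add_comm r j]
        ring
    _ = _ := by
        rw [sum_choose_mul_bernoulliOrder_mul_stirling2, multiStirling1,
          Nat.cast_choose ℚ (Nat.le_add_left r j), Nat.add_sub_cancel]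
        field_simp

/-- For integers `k_1,...,k_r ≥ 1`, `r ≥ 1` and `n ≥ 0`, the multi-Bernoulli numbers satisfy
`B_n^{(k_1,...,k_r)} = Σ_{l=0}^{n} Σ_{m=r}^{l+r} [C(n,l) B_{n−l}^{(r)} (−1)^{n−r−m}/(r! C(l+r,r))]
  ⬝ S_2(l+r,m) ⬝ S_1^{(k_1,...,k_r)}(m,r)`. -/
theorem multiBernoulli_eq_sum_multiStirling1 (r : ℕ) (hr : 1 ≤ r) (k : Fin r → ℕ)
    (hk : ∀ i, 1 ≤ k i) (n : ℕ) :
    multiBernoulli r k n =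
      ∑ l ∈ Finset.range (n + 1), ∑ m ∈ Finset.Icc r (l + r),
        (n.choose l : ℚ) * bernoulliOrder r (n - l) *
            (-1 : ℚ) ^ ((n : ℤ) - (r : ℤ) - (m : ℤ)) /
            ((r.factorial : ℚ) * ((l + r).choose r : ℚ)) *
          stirling2 (l + r) m * multiStirling1 r k m :=
  multiBernoulli_eq_sum_multiStirling1_general r k n
end

section
/- For integers k_1,...,k_r ≥ 1 and n, r ≥ 1, the multi-Lah numbers with last index negated satisfy L^{(k_1,...,k_{r−1},−k_r)}(n,r) = Σ_{p=r}^{n} Σ_{l=1}^{p} Σ_{m_r=1}^{p} Σ_{j=0}^{k_r} (−1)^{m_r+l} m_r! · m_r^{k_r−j} · binom(p,l) · binom(k_r,j) · S_2(l,m_r) · L^{(k_1,...,k_{r−2},k_{r−1}−j)}(p−l, r−1) · n!/p!, where S_2 are the Stirling numbers of the second kind. -/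
/-- Multi-Lah numbers, defined by the formal power series identity
`Σ_{n≥r} L^{(k_1,...,k_r)}(n,r) t^n/n! = Li_{k_1,...,k_r}(1-e^{-t})/(1-t)^r
  = (1-t)^{-r} ⬝ Σ_{m} liCoeff(m) (1-e^{-t})^m` in `ℚ⟦t⟧` (integer indices allowed).
Since `(1-e^{-t})^m` has order `≥ m`, the `n`-th coefficient of the series only involves the
(finitely many) terms with `m ≤ n`, so the infinite sum may be truncated exactly. -/
noncomputable def multiLah (r : ℕ) (k : Fin r → ℤ) (n : ℕ) : ℚ :=
  (n.factorial : ℚ) *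
    PowerSeries.coeff n
      (((1 - PowerSeries.X : PowerSeries ℚ) ^ r)⁻¹ *
        ∑ m ∈ Finset.range (n + 1), liCoeff r k m • oneSubExpNeg ^ m)

/-!
Write `z = 1 - e^{-t}` and `Li_k = ∑_N liCoeff k N X^N`, so that
`L^{(k)}(n, r) = n! [t^n] (1 - t)^{-r} Li_k(z)`. Splitting off the largest summation index gives
`liCoeff (k, a, -b) N = N^b ∑_{M < N} liCoeff (k, a) M`; expanding `N^b = ((N - M) + M)^b` by the
binomial theorem and absorbing `M^j` into the last index yields the series identity
`Li_{k,a,-b} = ∑_j C(b,j) Li_{-(b-j)} Li_{k,a-j}`. Substitution of `z` is a ring homomorphism, and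
splitting `(1 - t)^{-r} = (1 - t)^{-1} (1 - t)^{-(r-1)}` turns the three factors into the sum over
`p`, the Stirling numbers (via `l! [t^l] z^m = (-1)^{m+l} m! S_2(l, m)`) and the multi-Lah
numbers of depth `r - 1`.
-/

open PowerSeries Finset

lemma Fin.strictMono_snoc {α : Type*} [Preorder α] {n : ℕ} {f : Fin n → α} {a : α} :
    StrictMono (Fin.snoc f a : Fin (n + 1) → α) ↔ StrictMono f ∧ ∀ j, f j < a := by
  refine ⟨fun h => ⟨fun i j hij => ?_, fun j => ?_⟩, fun ⟨hf, ha⟩ i j hij => ?_⟩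
  · simpa using h (Fin.castSucc_lt_castSucc_iff.2 hij)
  · simpa using h (Fin.castSucc_lt_last j)
  · induction j using Fin.lastCases with
    | last =>
      obtain ⟨i, rfl⟩ := Fin.exists_castSucc_eq.2 hij.ne
      simpa using ha i
    | cast j =>
      obtain ⟨i, rfl⟩ := Fin.exists_castSucc_eq.2 (hij.trans (Fin.castSucc_lt_last j)).ne
      simpa using hf (Fin.castSucc_lt_castSucc_iff.1 hij)

lemma sum_antidiagonal_ite_fst_eq_zero {M : Type*} [AddCommMonoid M] (f : ℕ → M) (N : ℕ) :
    ∑ x ∈ antidiagonal N, (if x.1 = 0 then 0 else f x.2) = ∑ m ∈ range N, f m := by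
  rw [Finset.Nat.sum_antidiagonal_eq_sum_range_succ (fun i j => if i = 0 then 0 else f j),
    sum_range_succ', if_pos rfl, add_zero, ← sum_range_reflect]
  refine sum_congr rfl fun i hi => ?_
  rw [if_neg (Nat.succ_ne_zero _)]
  congr 1
  have := mem_range.1 hi
  omega

lemma sum_Icc_one_eq_sum_range {M : Type*} [AddCommMonoid M] {f : ℕ → M} (h0 : f 0 = 0)
    (p : ℕ) : ∑ l ∈ Icc 1 p, f l = ∑ l ∈ range (p + 1), f l := by
  refine sum_subset (fun l hl => by simp only [mem_Icc, mem_range] at hl ⊢; omega)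
    fun l hl hl' => ?_
  obtain rfl : l = 0 := by simp only [mem_Icc, mem_range, not_and, not_le] at hl hl'; omega
  exact h0

section liCoeff

open scoped Classical

variable {r : ℕ}

lemma val_lt_val_of_strictMono {N : ℕ} {m : Fin r → Fin (N + 1)} (hm : StrictMono m)
    (hpos : ∀ i, 0 < m i) (i : Fin r) : (i : ℕ) < m i := by
  obtain ⟨i, hi⟩ := i
  induction i with
  | zero => exact hpos _
  | succ i ih => exact Nat.lt_of_le_of_lt (ih (by omega)) (hm (Fin.mk_lt_mk.2 (Nat.lt_succ_self i)))

lemma liCoeff_eq_zero_of_lt (k : Fin r → ℤ) {n : ℕ} (h : n < r) : liCoeff r k n = 0 := by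
  refine sum_eq_zero fun m _ => if_neg ?_
  rintro ⟨hm, hpos, hsup⟩
  have hlast := val_lt_val_of_strictMono hm hpos ⟨r - 1, by omega⟩
  have hle := le_sup (f := fun i => (m i : ℕ)) (mem_univ ⟨r - 1, by omega⟩)
  simp only at hlast hle
  omega

lemma liCoeff_eq_sum_of_le (k : Fin r → ℤ) {n N : ℕ} (h : n ≤ N) :
    liCoeff r k n = ∑ m : Fin r → Fin (N + 1),
      if StrictMono m ∧ (∀ i, 0 < m i) ∧ (univ.sup fun i => (m i : ℕ)) = n then
        (∏ i, ((m i : ℕ) : ℚ) ^ (k i))⁻¹ else 0 := by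
  have hnN : n + 1 ≤ N + 1 := by omega
  refine Fintype.sum_of_injective (Fin.castLE hnN ∘ ·) (Fin.castLE_injective hnN).comp_left _ _
    (fun m hm => if_neg ?_) fun m => rfl
  rintro ⟨-, -, hsup⟩
  refine hm ⟨fun i => ⟨m i, ?_⟩, rfl⟩
  have := le_sup (f := fun i => (m i : ℕ)) (mem_univ i)
  omega

lemma strictMono_pos_sup_snoc_iff {N : ℕ} (hN : 0 < N) (v : Fin r → Fin (N + 1))
    (L : Fin (N + 1)) :
    (StrictMono (Fin.snoc v L : Fin (r + 1) → Fin (N + 1)) ∧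
        (∀ i, 0 < (Fin.snoc v L : Fin (r + 1) → Fin (N + 1)) i) ∧
        (univ.sup fun i => ((Fin.snoc v L : Fin (r + 1) → Fin (N + 1)) i : ℕ)) = N) ↔
      L = Fin.last N ∧ (StrictMono v ∧ (∀ i, 0 < v i) ∧ (univ.sup fun i => (v i : ℕ)) < N) := by
  have hsup : (univ.sup fun i => ((Fin.snoc v L : Fin (r + 1) → Fin (N + 1)) i : ℕ)) =
      (univ.sup fun i => (v i : ℕ)) ⊔ L := by
    simp [Fin.univ_castSuccEmb, sup_comm, Function.comp_def]
  simp only [Fin.strictMono_snoc, Fin.forall_fin_succ', Fin.snoc_castSucc, Fin.snoc_last, hsup]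
  constructor
  · rintro ⟨⟨hv, hlt⟩, ⟨hpos, hL⟩, hs⟩
    have hvL : (univ.sup fun i => (v i : ℕ)) < L :=
      (Finset.sup_lt_iff (f := fun i => (v i : ℕ)) (Fin.lt_def.1 hL)).2 fun i _ => hlt i
    rw [max_eq_right hvL.le] at hs
    exact ⟨Fin.ext hs, hv, hpos, by rwa [hs] at hvL⟩
  · rintro ⟨rfl, hv, hpos, hs⟩
    refine ⟨⟨hv, fun i => (Finset.sup_lt_iff hN).1 hs i (mem_univ i)⟩, ⟨hpos, hN⟩, ?_⟩
    simpa using hs.le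

lemma liCoeff_snoc (k : Fin r → ℤ) (c : ℤ) (N : ℕ) :
    liCoeff (r + 1) (Fin.snoc k c) N = ((N : ℚ) ^ c)⁻¹ * ∑ M ∈ range N, liCoeff r k M := by
  rcases N.eq_zero_or_pos with rfl | hN
  · simp [liCoeff_eq_zero_of_lt]
  calc liCoeff (r + 1) (Fin.snoc k c) N
      = ∑ v : Fin r → Fin (N + 1),
          if StrictMono v ∧ (∀ i, 0 < v i) ∧ (univ.sup fun i => (v i : ℕ)) < N then
            ((N : ℚ) ^ c)⁻¹ * (∏ i, ((v i : ℕ) : ℚ) ^ (k i))⁻¹ else 0 := by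
        rw [liCoeff, ← (Fin.snocEquiv fun _ => Fin (N + 1)).sum_comp, Fintype.sum_prod_type,
          sum_comm]
        refine sum_congr rfl fun v _ => ?_
        simp only [Fin.snocEquiv, Equiv.coe_fn_mk, strictMono_pos_sup_snoc_iff hN, ite_and,
          sum_ite_eq', mem_univ, if_true, Fin.prod_univ_castSucc, Fin.snoc_castSucc,
          Fin.snoc_last, Fin.val_last, mul_inv, mul_comm]
    _ = ((N : ℚ) ^ c)⁻¹ * ∑ M ∈ range N, liCoeff r k M := by
        rw [sum_congr rfl fun M hM => liCoeff_eq_sum_of_le k (mem_range.1 hM).le, sum_comm,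
          mul_sum]
        refine sum_congr rfl fun v _ => ?_
        by_cases hv : StrictMono v ∧ ∀ i, 0 < v i
        · simp only [hv, implies_true, true_and, sum_ite_eq, mem_range, mul_ite, mul_zero]
        · simp only [← and_assoc, hv, false_and, if_false, sum_const_zero, mul_zero]

end liCoeff

lemma liCoeff_snoc_sub {r : ℕ} (k : Fin r → ℤ) (c : ℤ) (j M : ℕ) :
    liCoeff (r + 1) (Fin.snoc k (c - j)) M = (M : ℚ) ^ j * liCoeff (r + 1) (Fin.snoc k c) M := by
  rcases M.eq_zero_or_pos with rfl | hM
  · simp [liCoeff_snoc]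
  rw [liCoeff_snoc, liCoeff_snoc, zpow_sub₀ (by positivity), zpow_natCast, inv_div,
    div_eq_mul_inv, mul_assoc]

noncomputable def liSeries (r : ℕ) (k : Fin r → ℤ) : PowerSeries ℚ :=
  PowerSeries.mk (liCoeff r k)

/-- `Li_{-e}(X) = ∑_{m ≥ 1} m^e X^m`. -/
noncomputable def liNegSeries (e : ℕ) : PowerSeries ℚ :=
  PowerSeries.mk fun m => if m = 0 then 0 else (m : ℚ) ^ e

lemma X_pow_dvd_liSeries (r : ℕ) (k : Fin r → ℤ) : X ^ r ∣ liSeries r k :=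
  X_pow_dvd_iff.2 fun _ hd => by rw [liSeries, coeff_mk]; exact liCoeff_eq_zero_of_lt k hd

lemma constantCoeff_liNegSeries (e : ℕ) : constantCoeff (liNegSeries e) = 0 := by
  simp [liNegSeries, ← coeff_zero_eq_constantCoeff_apply]

lemma liSeries_snoc_snoc_neg {r : ℕ} (k : Fin r → ℤ) (a : ℤ) (b : ℕ) :
    liSeries (r + 2) (Fin.snoc (Fin.snoc k a) (-(b : ℤ))) =
      ∑ j ∈ range (b + 1),
        (b.choose j : ℚ) • (liNegSeries (b - j) * liSeries (r + 1) (Fin.snoc k (a - j))) := by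
  ext N
  simp only [liSeries, liNegSeries, coeff_mk, map_sum, map_smul, coeff_mul, smul_eq_mul, mul_sum,
    ite_mul, zero_mul, mul_ite, mul_zero, liCoeff_snoc_sub]
  rw [sum_comm]
  calc liCoeff (r + 2) (Fin.snoc (Fin.snoc k a) (-(b : ℤ))) N
      = ∑ x ∈ antidiagonal N, if x.1 = 0 then 0 else
          ((x.2 + x.1 : ℕ) : ℚ) ^ b * liCoeff (r + 1) (Fin.snoc k a) x.2 := by
        rw [liCoeff_snoc, zpow_neg, inv_inv, zpow_natCast, mul_sum,
          ← sum_antidiagonal_ite_fst_eq_zero]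
        refine sum_congr rfl fun x hx => ?_
        rw [add_comm x.2, mem_antidiagonal.1 hx]
    _ = _ := by
        refine sum_congr rfl fun x _ => ?_
        split_ifs
        · simp
        · rw [Nat.cast_add, add_pow, sum_mul]
          exact sum_congr rfl fun j _ => by ring

section Subst

variable {R : Type*} [CommRing R] {a : PowerSeries R}

lemma coeff_pow_eq_zero_of_lt (ha : constantCoeff a = 0) {d m : ℕ} (h : d < m) :
    coeff d (a ^ m) = 0 :=
  X_pow_dvd_iff.1 (pow_dvd_pow_of_dvd (X_dvd_iff.2 ha) m) d h

lemma coeff_subst_eq_sum_range (ha : constantCoeff a = 0) (f : PowerSeries R) {d B : ℕ}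
    (h : d ≤ B) : coeff d (f.subst a) = ∑ m ∈ range (B + 1), coeff m f * coeff d (a ^ m) := by
  rw [coeff_subst' (HasSubst.of_constantCoeff_zero' ha)]
  refine finsum_eq_sum_of_support_subset _ fun m hm => mem_range.2 ?_
  by_contra hmB
  exact hm (show coeff m f • coeff d (a ^ m) = 0 by
    rw [coeff_pow_eq_zero_of_lt ha (by omega), smul_zero])

lemma X_pow_dvd_subst (ha : constantCoeff a = 0) {f : PowerSeries R} {r : ℕ} (h : X ^ r ∣ f) :
    X ^ r ∣ f.subst a := by
  have hsub := HasSubst.of_constantCoeff_zero' ha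
  obtain ⟨g, rfl⟩ := h
  rw [subst_mul hsub, subst_pow hsub, subst_X hsub]
  exact (pow_dvd_pow_of_dvd (X_dvd_iff.2 ha) r).mul_right _

lemma coeff_mul_eq_sum_Icc {F : PowerSeries R} (hF : constantCoeff F = 0) (H : PowerSeries R)
    (p : ℕ) : coeff p (F * H) = ∑ l ∈ Icc 1 p, coeff l F * coeff (p - l) H := by
  rw [coeff_mul, Finset.Nat.sum_antidiagonal_eq_sum_range_succ (fun i j => coeff i F * coeff j H),
    sum_Icc_one_eq_sum_range (by simp [hF])]

end Subst

lemma coeff_inv_one_sub_X_mul {k : Type*} [Field k] (f : PowerSeries k) (n : ℕ) :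
    coeff n ((1 - X)⁻¹ * f) = ∑ p ∈ range (n + 1), coeff p f := by
  rw [(PowerSeries.inv_eq_iff_mul_eq_one (by simp)).2 (mk_one_mul_one_sub_eq_one k), coeff_mul,
    Finset.Nat.sum_antidiagonal_eq_sum_range_succ (fun i j => coeff i (mk 1) * coeff j f),
    ← sum_range_reflect]
  refine sum_congr rfl fun p hp => ?_
  rw [coeff_mk, Pi.one_apply, one_mul, show n - (n.succ - 1 - p) = p by
    have := mem_range.1 hp; omega]

lemma constantCoeff_oneSubExpNeg : constantCoeff oneSubExpNeg = 0 := by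
  rw [oneSubExpNeg, ← coeff_zero_eq_constantCoeff_apply, map_sub, coeff_rescale, coeff_exp]
  norm_num

lemma factorial_mul_coeff_oneSubExpNeg_pow (l m : ℕ) :
    (l.factorial : ℚ) * coeff l (oneSubExpNeg ^ m) =
      (-1) ^ (m + l) * m.factorial * stirling2 l m := by
  have hz : oneSubExpNeg = (-1 : ℚ) • rescale (-1) (exp ℚ - 1) := by
    rw [map_sub, map_one, oneSubExpNeg, neg_one_smul, neg_sub]
  rw [hz, smul_pow, ← map_pow, map_smul, coeff_rescale, stirling2, smul_eq_mul]
  field_simp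
  ring

lemma multiLah_eq_factorial_mul_coeff (r : ℕ) (k : Fin r → ℤ) (n : ℕ) :
    multiLah r k n =
      n.factorial * coeff n (((1 - X) ^ r)⁻¹ * (liSeries r k).subst oneSubExpNeg) := by
  rw [multiLah, coeff_mul, coeff_mul]
  congr 1
  refine sum_congr rfl fun x hx => ?_
  rw [coeff_subst_eq_sum_range constantCoeff_oneSubExpNeg _
    (HasAntidiagonal.antidiagonal.snd_le hx), map_sum]
  simp only [map_smul, smul_eq_mul, liSeries, coeff_mk]

lemma sum_stirling2_eq_factorial_mul_coeff (e : ℕ) {l p : ℕ} (hlp : l ≤ p) :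
    ∑ mr ∈ Icc 1 p, (-1 : ℚ) ^ (mr + l) * mr.factorial * (mr : ℚ) ^ e * stirling2 l mr =
      l.factorial * coeff l ((liNegSeries e).subst oneSubExpNeg) := by
  rw [coeff_subst_eq_sum_range constantCoeff_oneSubExpNeg _ hlp, mul_sum,
    ← sum_Icc_one_eq_sum_range (by simp [liNegSeries])]
  refine sum_congr rfl fun mr hmr => ?_
  rw [liNegSeries, coeff_mk, if_neg (by simp only [mem_Icc] at hmr; omega),
    ← mul_left_comm, factorial_mul_coeff_oneSubExpNeg_pow]
  ring

lemma multiLah_snoc_snoc_neg {r : ℕ} (k : Fin r → ℤ) (a : ℤ) (b n : ℕ) :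
    multiLah (r + 2) (Fin.snoc (Fin.snoc k a) (-(b : ℤ))) n =
      ∑ j ∈ range (b + 1), (b.choose j : ℚ) * (n.factorial * coeff n ((1 - X)⁻¹ *
        ((liNegSeries (b - j)).subst oneSubExpNeg *
          (((1 - X) ^ (r + 1))⁻¹ *
            (liSeries (r + 1) (Fin.snoc k (a - j))).subst oneSubExpNeg)))) := by
  have hz := HasSubst.of_constantCoeff_zero' constantCoeff_oneSubExpNeg
  rw [multiLah_eq_factorial_mul_coeff, liSeries_snoc_snoc_neg, pow_succ', PowerSeries.mul_inv_rev,
    ← coe_substAlgHom hz]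
  simp only [map_sum, map_smul, map_mul, mul_sum, mul_smul_comm, smul_eq_mul]
  refine sum_congr rfl fun j _ => ?_
  rw [mul_left_comm]
  congr 3
  ring

lemma factorial_mul_coeff_eq_sum_stirling2_mul_multiLah (r : ℕ) (k : Fin r → ℤ) (e n : ℕ) :
    n.factorial * coeff n ((1 - X)⁻¹ * ((liNegSeries e).subst oneSubExpNeg *
        (((1 - X) ^ r)⁻¹ * (liSeries r k).subst oneSubExpNeg))) =
      ∑ p ∈ Icc (r + 1) n, ∑ l ∈ Icc 1 p, ∑ mr ∈ Icc 1 p,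
        (-1 : ℚ) ^ (mr + l) * mr.factorial * (mr : ℚ) ^ e * (p.choose l : ℚ) * stirling2 l mr *
          multiLah r k (p - l) * (n.factorial / p.factorial) := by
  set F := (liNegSeries e).subst oneSubExpNeg
  set H := ((1 - X) ^ r)⁻¹ * (liSeries r k).subst oneSubExpNeg
  have hF : constantCoeff F = 0 :=
    constantCoeff_subst_eq_zero constantCoeff_oneSubExpNeg _ (constantCoeff_liNegSeries e)
  have hFH : X ^ (r + 1) ∣ F * H := by
    rw [pow_succ']
    exact mul_dvd_mul (X_dvd_iff.2 hF)
      ((X_pow_dvd_subst constantCoeff_oneSubExpNeg (X_pow_dvd_liSeries r k)).mul_left _)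
  rw [coeff_inv_one_sub_X_mul, mul_sum, ← sum_subset (s₁ := Icc (r + 1) n) ?_ ?_]
  · refine sum_congr rfl fun p _ => ?_
    rw [coeff_mul_eq_sum_Icc hF, mul_sum]
    refine sum_congr rfl fun l hl => ?_
    have hlp : l ≤ p := (mem_Icc.1 hl).2
    calc (n.factorial : ℚ) * (coeff l F * coeff (p - l) H)
        = l.factorial * coeff l F * p.choose l * ((p - l).factorial * coeff (p - l) H) *
            (n.factorial / p.factorial) := by
          rw [Nat.cast_choose ℚ hlp]
          field_simp
      _ = _ := by
          rw [← sum_stirling2_eq_factorial_mul_coeff e hlp, ← multiLah_eq_factorial_mul_coeff,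
            sum_mul, sum_mul, sum_mul]
          exact sum_congr rfl fun mr _ => by ring
  · exact fun p hp => by simp only [mem_Icc, mem_range] at hp ⊢; omega
  · intro p hpn hp
    simp only [mem_Icc, mem_range, not_and, not_le] at hpn hp
    rw [X_pow_dvd_iff.1 hFH p (by omega), mul_zero]

/-- Here `k = (k_1, …, k_{r-2})`, `a = k_{r-1}`, `b = k_r` and `r = s + 2`. -/
theorem multiLah_neg_last_recurrence_general (s : ℕ) (k : Fin s → ℕ) (a b : ℕ) (n : ℕ) :
    multiLah (s + 2) (Fin.snoc (Fin.snoc (fun i => (k i : ℤ)) (a : ℤ)) (-(b : ℤ))) n =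
      ∑ p ∈ Finset.Icc (s + 2) n, ∑ l ∈ Finset.Icc 1 p, ∑ mr ∈ Finset.Icc 1 p,
        ∑ j ∈ Finset.range (b + 1),
          (-1 : ℚ) ^ (mr + l) * (mr.factorial : ℚ) * (mr : ℚ) ^ (b - j) *
            (p.choose l : ℚ) * (b.choose j : ℚ) * stirling2 l mr *
            multiLah (s + 1) (Fin.snoc (fun i => (k i : ℤ)) ((a : ℤ) - (j : ℤ))) (p - l) *
            ((n.factorial : ℚ) / (p.factorial : ℚ)) := by
  simp only [multiLah_snoc_snoc_neg, factorial_mul_coeff_eq_sum_stirling2_mul_multiLah, mul_sum]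
  rw [sum_comm]
  refine sum_congr rfl fun p _ => ?_
  rw [sum_comm]
  refine sum_congr rfl fun l _ => ?_
  rw [sum_comm]
  exact sum_congr rfl fun mr _ => sum_congr rfl fun j _ => by ring

/-- Recurrence for the multi-Lah numbers with last index negated. Here the `r ≥ 2` indices
`(k_1,…,k_{r-2},k_{r-1},k_r)` are encoded as `Fin.snoc (Fin.snoc k a) b` with
`k = (k_1,…,k_{r-2}) : Fin s → ℕ`, `a = k_{r-1}`, `b = k_r`, so `r = s + 2`. The claim:
`L^{(k_1,...,k_{r-1},−k_r)}(n,r) = Σ_{p=r}^{n} Σ_{l=1}^{p} Σ_{m_r=1}^{p} Σ_{j=0}^{k_r}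
  (−1)^{m_r+l} m_r! ⬝ m_r^{k_r−j} ⬝ C(p,l) ⬝ C(k_r,j) ⬝ S_2(l,m_r)
  ⬝ L^{(k_1,...,k_{r-2},k_{r-1}−j)}(p−l, r−1) ⬝ n!/p!`. -/
theorem multiLah_neg_last_recurrence (s : ℕ) (k : Fin s → ℕ) (a b : ℕ)
    (hk : ∀ i, 1 ≤ k i) (ha : 1 ≤ a) (hb : 1 ≤ b) (n : ℕ) (hn : 1 ≤ n) :
    multiLah (s + 2) (Fin.snoc (Fin.snoc (fun i => (k i : ℤ)) (a : ℤ)) (-(b : ℤ))) n =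
      ∑ p ∈ Finset.Icc (s + 2) n, ∑ l ∈ Finset.Icc 1 p, ∑ mr ∈ Finset.Icc 1 p,
        ∑ j ∈ Finset.range (b + 1),
          (-1 : ℚ) ^ (mr + l) * (mr.factorial : ℚ) * (mr : ℚ) ^ (b - j) *
            (p.choose l : ℚ) * (b.choose j : ℚ) * stirling2 l mr *
            multiLah (s + 1) (Fin.snoc (fun i => (k i : ℤ)) ((a : ℤ) - (j : ℤ))) (p - l) *
            ((n.factorial : ℚ) / (p.factorial : ℚ)) :=
  multiLah_neg_last_recurrence_general s k a b n
end

section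
/- For integers k_1,...,k_{r−1} ≥ 1 and k_r ≥ 2, and for every t with 0 < |t| < 1, the multiple logarithm satisfies (d/dt) Li_{k_1,...,k_{r−1},k_r}(t) = (1/t) · Li_{k_1,...,k_{r−1},k_r−1}(t). -/
/-- The multiple logarithm `Li_{k_1,...,k_r}(z) = Σ_{0<m_1<⋯<m_r} z^{m_r}/(m_1^{k_1}⋯m_r^{k_r})`,
where the sum ranges over all strictly increasing `r`-tuples of positive integers. Since the
tuple is strictly increasing, `m_r` is the supremum of its entries. -/
noncomputable def multiLog (r : ℕ) (k : Fin r → ℕ) (z : ℝ) : ℝ :=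
  ∑' m : {m : Fin r → ℕ // StrictMono m ∧ ∀ i, 0 < m i},
    z ^ (Finset.univ.sup m.1) / ∏ i, (m.1 i : ℝ) ^ k i

/-!
Termwise, `Li_{k,b+1}(t) = ∑_m t^{m_r} / (m_1^{k_1} ⋯ m_r^{b+1})` is a power series whose
derivative has the terms
`m_r t^{m_r - 1} / (m_1^{k_1} ⋯ m_r^{b+1}) = t⁻¹ · t^{m_r} / (m_1^{k_1} ⋯ m_r^b)`.
Differentiating under the sum is legitimate on any ball `|z| < ρ < 1`: the coefficients of
`ρ^{m_r}` are at most `1`, and `∑_v ρ^{max v}` over all tuples `v` converges since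
`ρ^{max(a, c)} ≤ (√ρ)^a (√ρ)^c`.
-/

lemma Monotone.finset_sup_univ_eq_last {α : Type*} [SemilatticeSup α] [OrderBot α] {r : ℕ}
    {m : Fin (r + 1) → α} (hm : Monotone m) : Finset.univ.sup m = m (Fin.last r) :=
  le_antisymm (Finset.sup_le fun i _ => hm (Fin.le_last i)) (Finset.le_sup (Finset.mem_univ _))

lemma prod_pow_snoc_succ {M : Type*} [CommMonoid M] {s : ℕ} (x : Fin (s + 1) → M)
    (k : Fin s → ℕ) (b : ℕ) :
    ∏ i, x i ^ (Fin.snoc k (b + 1) : Fin (s + 1) → ℕ) i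
      = (∏ i, x i ^ (Fin.snoc k b : Fin (s + 1) → ℕ) i) * x (Fin.last s) := by
  simp only [Fin.prod_univ_castSucc, Fin.snoc_castSucc, Fin.snoc_last, pow_succ, mul_assoc]

theorem summable_pow_sup_univ {n : ℕ} {σ : ℝ} (h0 : 0 ≤ σ) (h1 : σ < 1) :
    Summable fun v : Fin n → ℕ => σ ^ Finset.univ.sup v := by
  induction n generalizing σ with
  | zero => exact .of_finite
  | succ n ih =>
    have hτ0 : 0 ≤ √σ := Real.sqrt_nonneg σ
    have hτ1 : √σ < 1 := by rwa [Real.sqrt_lt' one_pos, one_pow]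
    rw [← (Fin.consEquiv fun _ => ℕ).summable_iff]
    refine .of_nonneg_of_le (fun _ => pow_nonneg h0 _) (fun ⟨a, w⟩ => ?_)
      ((summable_geometric_of_lt_one hτ0 hτ1).mul_of_nonneg (ih hτ0 hτ1)
        (fun _ => pow_nonneg hτ0 _) (fun _ => pow_nonneg hτ0 _))
    have hsup : Finset.univ.sup (Fin.cons a w : Fin (n + 1) → ℕ) = max a (Finset.univ.sup w) := by
      simp [Fin.univ_succ, Finset.sup_map]
    calc σ ^ Finset.univ.sup (Fin.cons a w : Fin (n + 1) → ℕ)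
        = √σ ^ (2 * max a (Finset.univ.sup w)) := by rw [hsup, pow_mul, Real.sq_sqrt h0]
      _ ≤ √σ ^ (a + Finset.univ.sup w) := pow_le_pow_of_le_one hτ0 hτ1.le (by omega)
      _ = √σ ^ a * √σ ^ Finset.univ.sup w := pow_add _ _ _

theorem hasDerivAt_tsum_mul_pow {ι 𝕜 : Type*} [RCLike 𝕜] {c : ι → 𝕜} {N : ι → ℕ} {ρ : ℝ}
    (hN : ∀ i, N i ≠ 0) (hc : Summable fun i => ‖c i‖ * N i * ρ ^ N i) {t : 𝕜} (ht : ‖t‖ < ρ) :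
    HasDerivAt (fun z => ∑' i, c i * z ^ N i) (∑' i, c i * N i * t ^ (N i - 1)) t := by
  have hρ : 0 < ρ := (norm_nonneg t).trans_lt ht
  refine hasDerivAt_tsum_of_isPreconnected (g := fun i z => c i * z ^ N i)
    (g' := fun i z => c i * N i * z ^ (N i - 1)) (hc.mul_left ρ⁻¹) Metric.isOpen_ball
    (convex_ball 0 ρ).isPreconnected (fun i z _ => ?_) (fun i z hz => ?_)
    (Metric.mem_ball_self hρ) ?_ (mem_ball_zero_iff.mpr ht)
  · simpa only [mul_assoc] using (hasDerivAt_pow (N i) z).const_mul (c i)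
  · have hz : ‖z‖ ≤ ρ := (mem_ball_zero_iff.mp hz).le
    calc ‖c i * N i * z ^ (N i - 1)‖ = ‖c i‖ * N i * ‖z‖ ^ (N i - 1) := by simp
      _ ≤ ‖c i‖ * N i * ρ ^ (N i - 1) := by gcongr
      _ = ρ⁻¹ * (‖c i‖ * N i * ρ ^ N i) := by
        rw [pow_sub₀ ρ hρ.ne' (Nat.one_le_iff_ne_zero.mpr (hN i)), pow_one]; ring
  · simp [hN]

abbrev PosStrictMonoTuple (r : ℕ) := {m : Fin r → ℕ // StrictMono m ∧ ∀ i, 0 < m i}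

lemma multiLog_eq_tsum (r : ℕ) (k : Fin r → ℕ) :
    multiLog r k = fun z => ∑' m : PosStrictMonoTuple r,
      (∏ i, (m.1 i : ℝ) ^ k i)⁻¹ * z ^ Finset.univ.sup m.1 := by
  funext z
  simp only [multiLog, div_eq_inv_mul]

lemma summable_inv_prod_pow_mul_pow_sup {r : ℕ} (k : Fin r → ℕ) {ρ : ℝ} (h0 : 0 ≤ ρ)
    (h1 : ρ < 1) :
    Summable fun m : Fin r → ℕ => (∏ i, (m i : ℝ) ^ k i)⁻¹ * ρ ^ Finset.univ.sup m := by
  refine .of_nonneg_of_le (fun _ => by positivity) (fun m => ?_) (summable_pow_sup_univ h0 h1)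
  -- the product is a natural number, so its inverse is at most `1` (also when it is `0`)
  have hw : (∏ i, (m i : ℝ) ^ k i)⁻¹ ≤ 1 := by
    exact_mod_cast Nat.cast_inv_le_one (∏ i, m i ^ k i)
  exact mul_le_of_le_one_left (pow_nonneg h0 _) hw

lemma inv_prod_pow_snoc_succ_mul_sup {s : ℕ} (k : Fin s → ℕ) (b : ℕ)
    (m : PosStrictMonoTuple (s + 1)) :
    (∏ i, (m.1 i : ℝ) ^ (Fin.snoc k (b + 1) : Fin (s + 1) → ℕ) i)⁻¹ * (Finset.univ.sup m.1 : ℕ)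
      = (∏ i, (m.1 i : ℝ) ^ (Fin.snoc k b : Fin (s + 1) → ℕ) i)⁻¹ := by
  have hlast : (m.1 (Fin.last s) : ℝ) ≠ 0 := by exact_mod_cast (m.2.2 _).ne'
  rw [m.2.1.monotone.finset_sup_univ_eq_last, prod_pow_snoc_succ, mul_inv, mul_assoc,
    inv_mul_cancel₀ hlast, mul_one]

theorem hasDerivAt_multiLog_general (s : ℕ) (k : Fin s → ℕ) (b : ℕ) (hb : 2 ≤ b)
    (t : ℝ) (ht0 : 0 < |t|) (ht1 : |t| < 1) :
    HasDerivAt (multiLog (s + 1) (Fin.snoc k b))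
      ((1 / t) * multiLog (s + 1) (Fin.snoc k (b - 1)) t) t := by
  obtain ⟨b, rfl⟩ : ∃ b', b = b' + 1 := ⟨b - 1, by omega⟩
  obtain ⟨ρ, htρ, hρ1⟩ := exists_between ht1
  have hsup : ∀ m : PosStrictMonoTuple (s + 1), Finset.univ.sup m.1 ≠ 0 := fun m =>
    m.2.1.monotone.finset_sup_univ_eq_last.trans_ne (m.2.2 _).ne'
  have hsum := (summable_inv_prod_pow_mul_pow_sup (Fin.snoc k b) ((abs_nonneg t).trans htρ.le)
    hρ1).subtype fun m => StrictMono m ∧ ∀ i, 0 < m i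
  rw [multiLog_eq_tsum]
  refine (hasDerivAt_tsum_mul_pow hsup ?_ htρ).congr_deriv ?_
  · refine hsum.congr fun m => ?_
    rw [Real.norm_eq_abs, abs_of_nonneg (by positivity), inv_prod_pow_snoc_succ_mul_sup]
    rfl
  · rw [Nat.add_sub_cancel, multiLog, ← tsum_mul_left]
    refine tsum_congr fun m => ?_
    rw [inv_prod_pow_snoc_succ_mul_sup,
      pow_sub₀ t (abs_pos.mp ht0) (Nat.one_le_iff_ne_zero.mpr (hsup m))]
    ring

/-- For integers `k_1,...,k_{r-1} ≥ 1` and `k_r ≥ 2` and every real `t` with `0 < |t| < 1`,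
`(d/dt) Li_{k_1,...,k_{r-1},k_r}(t) = (1/t) ⬝ Li_{k_1,...,k_{r-1},k_r−1}(t)`. Here the indices
`(k_1,…,k_{r-1},k_r)` are encoded as `Fin.snoc k b` with `k = (k_1,…,k_{r-1}) : Fin s → ℕ` and
`b = k_r`, so `r = s + 1`. -/
theorem hasDerivAt_multiLog (s : ℕ) (k : Fin s → ℕ) (hk : ∀ i, 1 ≤ k i) (b : ℕ) (hb : 2 ≤ b)
    (t : ℝ) (ht0 : 0 < |t|) (ht1 : |t| < 1) :
    HasDerivAt (multiLog (s + 1) (Fin.snoc k b))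
      ((1 / t) * multiLog (s + 1) (Fin.snoc k (b - 1)) t) t :=
  hasDerivAt_multiLog_general s k b hb t ht0 ht1
end
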